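/- Let h : E ⟶ P and d : U ⟶ P be monomorphisms in a category with pullbacks, and let X with maps c₁ : X ⟶ U and c₂ : X ⟶ E be their intersection (pullback of h and d). Suppose i' : U ⟶ E and i : V ⟶ U are maps such that: (a) the composite ⟨q₀', q₁', q₂'⟩ : E ⟶ U × U × U is a monomorphism, (b) q_j' ∘ i' ∘ i = i for j ∈ {0,1,2}, and (c) q₀' ∘ c₂ = q₁' ∘ c₂ = q₂' ∘ c₂ = i ∘ q ∘ q₀' ∘ c₂ = c₁ for a map q : U ⟶ V with i a monomorphism. Then i' ∘ c₁ = c₂. -/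
import Mathlib

open CategoryTheory CategoryTheory.Limits

theorem intersection_lemma {C : Type*} [Category C] [HasFiniteProducts C]
    {U V E P X : C}
    (h : E ⟶ P) (d : U ⟶ P) [Mono h] [Mono d]
    (c₁ : X ⟶ U) (c₂ : X ⟶ E) (hX : IsPullback c₂ c₁ h d)
    (i' : U ⟶ E) (i : V ⟶ U) [Mono i] (q : U ⟶ V)
    (q₀' q₁' q₂' : E ⟶ U)
    (hmono : Mono (prod.lift q₀' (prod.lift q₁' q₂')))
    (h₀ : i ≫ i' ≫ q₀' = i) (h₁ : i ≫ i' ≫ q₁' = i) (h₂ : i ≫ i' ≫ q₂' = i)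
    (hc₀ : c₂ ≫ q₀' = c₁) (hc₁ : c₂ ≫ q₁' = c₁) (hc₂ : c₂ ≫ q₂' = c₁)
    (hc₃ : c₂ ≫ q₀' ≫ q ≫ i = c₁) :
    c₁ ≫ i' = c₂ := by
  have hfac : c₁ ≫ q ≫ i = c₁ := by
    conv_lhs => rw [← hc₀]
    simpa [Category.assoc] using hc₃
  have key : ∀ (p : E ⟶ U), i ≫ i' ≫ p = i → c₂ ≫ p = c₁ →
      (c₁ ≫ i') ≫ p = c₂ ≫ p := by
    intro p hp hcp
    calc (c₁ ≫ i') ≫ p = (c₁ ≫ q ≫ i) ≫ i' ≫ p := by rw [hfac, Category.assoc]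
    _ = c₁ ≫ q ≫ (i ≫ i' ≫ p) := by simp [Category.assoc]
    _ = c₁ := by rw [hp, hfac]
    _ = c₂ ≫ p := hcp.symm
  rw [← cancel_mono (prod.lift q₀' (prod.lift q₁' q₂'))]
  apply Limits.prod.hom_ext
  · simp only [Category.assoc, prod.lift_fst]
    simpa [Category.assoc] using key q₀' h₀ hc₀
  · apply Limits.prod.hom_ext <;> simp only [Category.assoc, prod.lift_snd, prod.lift_fst, prod.lift_snd]
    · simpa [Category.assoc] using key q₁' h₁ hc₁
    · simpa [Category.assoc] using key q₂' h₂ hc₂
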